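/- Let Y and Y′ be random variables measurable with respect to sub-σ-algebras A and A′ respectively, and let f be a bounded nonnegative jointly measurable function of the pair, say 0 ≤ f ≤ M. Let (Ỹ, Ỹ′) be a pair where Ỹ and Ỹ′ are independent with the same marginal distributions as Y and Y′. Then |E f(Y, Y′) − E f(Ỹ, Ỹ′)| ≤ 2M · β(A, A′). -/

import Mathlib

open MeasureTheory

/-- The β-mixing (absolute regularity) coefficient between two sub-σ-algebras. -/
noncomputable def betaMix {Ω : Type*} [MeasurableSpace Ω] (μ : Measure Ω)
    (𝓐 𝓑 : MeasurableSpace Ω) : ℝ :=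
  sSup {x : ℝ | ∃ (n m : ℕ) (A : Fin n → Set Ω) (B : Fin m → Set Ω),
    (∀ i, MeasurableSet[𝓐] (A i)) ∧ (∀ j, MeasurableSet[𝓑] (B j)) ∧
    Pairwise (Function.onFun Disjoint A) ∧ Pairwise (Function.onFun Disjoint B) ∧
    (⋃ i, A i) = Set.univ ∧ (⋃ j, B j) = Set.univ ∧
    x = (1 / 2) * ∑ i, ∑ j,
      |(μ (A i ∩ B j)).toReal - (μ (A i)).toReal * (μ (B j)).toReal|}

/-!
On every measurable set `T ⊆ E × E'` the law of `(Y, Y')` and the product of the marginal laws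
differ by at most `2 β(𝓐, 𝓐')`. On a union of cells `g ⁻¹' {a} ×ˢ h ⁻¹' {b}` of a finite
measurable grid, the difference is bounded by the sum over the partitions
`{(g ∘ Y) ⁻¹' {a}}` of `𝓐` and `{(h ∘ Y') ⁻¹' {b}}` of `𝓐'` appearing in the definition of `β`;
these unions form an algebra generating the product σ-algebra, hence approximate every
measurable set. The layer-cake formula `∫ f = ∫₀ᴹ P(f ≥ t) dt` turns this bound on the
super-level sets of `f` into the bound on `∫ f`.
-/

open Set MeasureTheory
open scoped symmDiff

lemma abs_measureReal_preimage_sub_le_sum {α γ : Type*} [MeasurableSpace α] [Fintype γ]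
    {ν₁ ν₂ : Measure α} [IsFiniteMeasure ν₁] [IsFiniteMeasure ν₂] {f : α → γ}
    (hf : ∀ c, MeasurableSet (f ⁻¹' {c})) (S : Set γ) :
    |ν₁.real (f ⁻¹' S) - ν₂.real (f ⁻¹' S)|
      ≤ ∑ c, |ν₁.real (f ⁻¹' {c}) - ν₂.real (f ⁻¹' {c})| := by
  classical
  rw [← S.coe_toFinset, ← sum_measureReal_preimage_singleton _ fun c _ => hf c,
    ← sum_measureReal_preimage_singleton _ fun c _ => hf c, ← Finset.sum_sub_distrib]
  exact (Finset.abs_sum_le_sum_abs _ _).trans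
    (Finset.sum_le_sum_of_subset_of_nonneg (Finset.subset_univ _) fun _ _ _ => abs_nonneg _)

lemma abs_measureReal_sub_le_of_measureDense {α : Type*} [MeasurableSpace α]
    {ν₁ ν₂ : Measure α} [IsFiniteMeasure ν₁] [IsFiniteMeasure ν₂] {𝒜 : Set (Set α)}
    (h𝒜 : (ν₁ + ν₂).MeasureDense 𝒜) {c : ℝ} (hc : ∀ s ∈ 𝒜, |ν₁.real s - ν₂.real s| ≤ c)
    {s : Set α} (hs : MeasurableSet s) : |ν₁.real s - ν₂.real s| ≤ c := by
  refine le_of_forall_pos_le_add fun ε hε => ?_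
  obtain ⟨t, ht, hst⟩ := h𝒜.approx s hs (measure_ne_top _ _) ε hε
  have h₁ := abs_measureReal_sub_le_measureReal_symmDiff (μ := ν₁) hs.nullMeasurableSet
    (h𝒜.measurable t ht).nullMeasurableSet
  have h₂ := abs_measureReal_sub_le_measureReal_symmDiff (μ := ν₂) hs.nullMeasurableSet
    (h𝒜.measurable t ht).nullMeasurableSet
  have hst' : ν₁.real (s ∆ t) + ν₂.real (s ∆ t) < ε := by
    rw [← measureReal_add_apply]; exact ENNReal.toReal_lt_of_lt_ofReal hst
  have h₃ := hc t ht
  rw [abs_le] at h₁ h₂ h₃ ⊢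
  constructor <;> linarith

lemma abs_integral_sub_le_of_abs_measureReal_le {α : Type*} [MeasurableSpace α]
    {ν₁ ν₂ : Measure α} [IsFiniteMeasure ν₁] [IsFiniteMeasure ν₂] {f : α → ℝ}
    (hf : Measurable f) {M c : ℝ} (hM : 0 ≤ M) (hf0 : ∀ x, 0 ≤ f x) (hfM : ∀ x, f x ≤ M)
    (hc : ∀ t, |ν₁.real {x | t ≤ f x} - ν₂.real {x | t ≤ f x}| ≤ c) :
    |∫ x, f x ∂ν₁ - ∫ x, f x ∂ν₂| ≤ M * c := by
  have hlayer (ν : Measure α) [IsFiniteMeasure ν] :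
      ∫ x, f x ∂ν = ∫ t in Ioc 0 M, ν.real {x | t ≤ f x} :=
    (Integrable.of_bound hf.aestronglyMeasurable M (ae_of_all _ fun x => by
      rw [Real.norm_of_nonneg (hf0 x)]; exact hfM x)).integral_eq_integral_Ioc_meas_le
      (ae_of_all _ hf0) (ae_of_all _ hfM)
  have hint (ν : Measure α) [IsFiniteMeasure ν] :
      IntegrableOn (fun t => ν.real {x | t ≤ f x}) (Ioc 0 M) := by
    have hanti : Antitone fun t => ν.real {x | t ≤ f x} := fun _ _ hst =>
      measureReal_mono fun _ hx => hst.trans hx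
    exact (hanti.locallyIntegrable.integrableOn_isCompact isCompact_Icc).mono_set
      Ioc_subset_Icc_self
  rw [hlayer ν₁, hlayer ν₂, ← integral_sub (hint ν₁) (hint ν₂)]
  calc _ ≤ c * volume.real (Ioc 0 M) := by
        rw [← Real.norm_eq_abs]
        exact norm_setIntegral_le_of_norm_le_const measure_Ioc_lt_top fun t _ => hc t
    _ = M * c := by rw [Real.volume_real_Ioc_of_le hM, sub_zero, mul_comm]

/-- The algebra generated by the measurable rectangles of `E × E'`: the unions of cells
`(g ⁻¹' {a}) ×ˢ (h ⁻¹' {b})` of a finite measurable grid. -/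
def rectangleAlgebra (E E' : Type*) [MeasurableSpace E] [MeasurableSpace E'] :
    Set (Set (E × E')) :=
  {W | ∃ (α β : Type) (_ : Finite α) (_ : Finite β) (g : E → α) (h : E' → β),
    (∀ a, MeasurableSet (g ⁻¹' {a})) ∧ (∀ b, MeasurableSet (h ⁻¹' {b})) ∧
    ∃ S, W = Prod.map g h ⁻¹' S}

lemma prodMap_preimage_singleton {E E' α β : Type*} (g : E → α) (h : E' → β) (a : α) (b : β) :
    Prod.map g h ⁻¹' {(a, b)} = (g ⁻¹' {a}) ×ˢ (h ⁻¹' {b}) := by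
  rw [← singleton_prod_singleton, preimage_prod_map_prod]

section RectangleAlgebra

variable {E E' : Type*} [MeasurableSpace E] [MeasurableSpace E']

lemma measurableSet_prodMap_preimage_singleton {α β : Type*} {g : E → α} {h : E' → β}
    (hg : ∀ a, MeasurableSet (g ⁻¹' {a})) (hh : ∀ b, MeasurableSet (h ⁻¹' {b})) (p : α × β) :
    MeasurableSet (Prod.map g h ⁻¹' {p}) := by
  obtain ⟨a, b⟩ := p
  rw [prodMap_preimage_singleton]
  exact (hg a).prod (hh b)

lemma measurableSet_of_mem_rectangleAlgebra {W : Set (E × E')}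
    (hW : W ∈ rectangleAlgebra E E') : MeasurableSet W := by
  obtain ⟨α, β, _, _, g, h, hg, hh, S, rfl⟩ := hW
  rw [← biUnion_preimage_singleton]
  exact MeasurableSet.biUnion S.to_countable fun p _ =>
    measurableSet_prodMap_preimage_singleton hg hh p

lemma prod_mem_rectangleAlgebra {s : Set E} {t : Set E'} (hs : MeasurableSet s)
    (ht : MeasurableSet t) : s ×ˢ t ∈ rectangleAlgebra E E' :=
  ⟨Prop, Prop, inferInstance, inferInstance, (· ∈ s), (· ∈ t),
    fun P => measurableSet_setOfPred.1 hs (measurableSet_singleton P),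
    fun P => measurableSet_setOfPred.1 ht (measurableSet_singleton P),
    {(True, True)}, by ext; simp [Prod.ext_iff]⟩

lemma isSetAlgebra_rectangleAlgebra : IsSetAlgebra (rectangleAlgebra E E') where
  empty_mem := ⟨Unit, Unit, inferInstance, inferInstance, fun _ => (), fun _ => (),
    fun _ => by simp, fun _ => by simp, ∅, rfl⟩
  compl_mem := by
    rintro _ ⟨α, β, hα, hβ, g, h, hg, hh, S, rfl⟩
    exact ⟨α, β, hα, hβ, g, h, hg, hh, Sᶜ, rfl⟩
  union_mem := by
    rintro _ _ ⟨α₁, β₁, _, _, g₁, h₁, hg₁, hh₁, S₁, rfl⟩ ⟨α₂, β₂, _, _, g₂, h₂, hg₂, hh₂, S₂, rfl⟩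
    refine ⟨α₁ × α₂, β₁ × β₂, inferInstance, inferInstance, fun x => (g₁ x, g₂ x),
      fun y => (h₁ y, h₂ y), fun ⟨a₁, a₂⟩ => ?_, fun ⟨b₁, b₂⟩ => ?_,
      {p | (p.1.1, p.2.1) ∈ S₁ ∨ (p.1.2, p.2.2) ∈ S₂}, rfl⟩
    · rw [← singleton_prod_singleton, mk_preimage_prod]; exact (hg₁ a₁).inter (hg₂ a₂)
    · rw [← singleton_prod_singleton, mk_preimage_prod]; exact (hh₁ b₁).inter (hh₂ b₂)

lemma generateFrom_rectangleAlgebra :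
    MeasurableSpace.generateFrom (rectangleAlgebra E E') = Prod.instMeasurableSpace := by
  refine le_antisymm (MeasurableSpace.generateFrom_le fun _ =>
    measurableSet_of_mem_rectangleAlgebra) ?_
  rw [← generateFrom_prod]
  exact MeasurableSpace.generateFrom_mono
    (image2_subset_iff.2 fun _ hs _ ht => prod_mem_rectangleAlgebra hs ht)

end RectangleAlgebra

section BetaMix

variable {Ω : Type*} {𝓐 𝓐' m0 : MeasurableSpace Ω} {μ : Measure Ω}

lemma sum_measureReal_inter_eq [IsFiniteMeasure μ] {ι : Type*} [Fintype ι] {A : ι → Set Ω}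
    (hA : ∀ i, MeasurableSet (A i)) (hdisj : Pairwise (Function.onFun Disjoint A))
    (hcover : ⋃ i, A i = univ) {s : Set Ω} (hs : MeasurableSet s) :
    ∑ i, μ.real (s ∩ A i) = μ.real s := by
  rw [← measureReal_iUnion_fintype
    (fun _ _ hij => (hdisj hij).mono inter_subset_right inter_subset_right)
    fun i => hs.inter (hA i), ← inter_iUnion, hcover, inter_univ]

lemma sum_abs_measureReal_inter_sub_mul_le_two [IsProbabilityMeasure μ] {ι κ : Type*}
    [Fintype ι] [Fintype κ] {A : ι → Set Ω} {B : κ → Set Ω} (hA : ∀ i, MeasurableSet (A i))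
    (hB : ∀ j, MeasurableSet (B j)) (hdA : Pairwise (Function.onFun Disjoint A))
    (hdB : Pairwise (Function.onFun Disjoint B)) (hcA : ⋃ i, A i = univ)
    (hcB : ⋃ j, B j = univ) :
    ∑ i, ∑ j, |μ.real (A i ∩ B j) - μ.real (A i) * μ.real (B j)| ≤ 2 := by
  have hA1 : ∑ i, μ.real (A i) = 1 := by
    simpa using sum_measureReal_inter_eq (μ := μ) hA hdA hcA MeasurableSet.univ
  have hB1 : ∑ j, μ.real (B j) = 1 := by
    simpa using sum_measureReal_inter_eq (μ := μ) hB hdB hcB MeasurableSet.univ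
  calc ∑ i, ∑ j, |μ.real (A i ∩ B j) - μ.real (A i) * μ.real (B j)|
      ≤ ∑ i, ∑ j, (μ.real (A i ∩ B j) + μ.real (A i) * μ.real (B j)) := by
        gcongr with i _ j _
        refine (abs_sub _ _).trans_eq ?_
        rw [abs_of_nonneg measureReal_nonneg, abs_of_nonneg (by positivity)]
    _ = 2 := by
        simp only [Finset.sum_add_distrib, sum_measureReal_inter_eq hB hdB hcB (hA _),
          ← Finset.mul_sum, hB1, mul_one, hA1]
        norm_num

lemma sum_abs_measureReal_inter_sub_mul_le_two_betaMix [IsProbabilityMeasure μ]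
    (h𝓐 : 𝓐 ≤ m0) (h𝓐' : 𝓐' ≤ m0) {ι κ : Type*} [Fintype ι] [Fintype κ]
    {A : ι → Set Ω} {B : κ → Set Ω} (hA : ∀ i, MeasurableSet[𝓐] (A i))
    (hB : ∀ j, MeasurableSet[𝓐'] (B j)) (hdA : Pairwise (Function.onFun Disjoint A))
    (hdB : Pairwise (Function.onFun Disjoint B)) (hcA : ⋃ i, A i = univ)
    (hcB : ⋃ j, B j = univ) :
    ∑ i, ∑ j, |μ.real (A i ∩ B j) - μ.real (A i) * μ.real (B j)| ≤ 2 * betaMix μ 𝓐 𝓐' := by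
  let e := (Fintype.equivFin ι).symm
  let e' := (Fintype.equivFin κ).symm
  suffices (1 / 2) * ∑ i, ∑ j, |μ.real (A i ∩ B j) - μ.real (A i) * μ.real (B j)|
      ≤ betaMix μ 𝓐 𝓐' by linarith
  refine le_csSup ⟨1, ?_⟩ ⟨_, _, A ∘ e, B ∘ e', fun i => hA _, fun j => hB _,
    hdA.comp_of_injective e.injective, hdB.comp_of_injective e'.injective,
    (e.surjective.iUnion_comp A).trans hcA, (e'.surjective.iUnion_comp B).trans hcB, ?_⟩
  · rintro _ ⟨n, m, A, B, hA, hB, hdA, hdB, hcA, hcB, rfl⟩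
    have := sum_abs_measureReal_inter_sub_mul_le_two (μ := μ) (fun i => h𝓐 _ (hA i))
      (fun j => h𝓐' _ (hB j)) hdA hdB hcA hcB
    simp only [measureReal_def] at this
    linarith
  · simp only [Function.comp_apply, measureReal_def]
    rw [← e.sum_comp]
    simp only [← e'.sum_comp]

end BetaMix

section Coupling

variable {Ω E E' : Type*} {𝓐 𝓐' m0 : MeasurableSpace Ω} {μ : Measure Ω}
  [MeasurableSpace E] [MeasurableSpace E'] {Y : Ω → E} {Y' : Ω → E'}

lemma abs_measureReal_map_sub_prod_le_two_betaMix [IsProbabilityMeasure μ]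
    (h𝓐 : 𝓐 ≤ m0) (h𝓐' : 𝓐' ≤ m0) (hY : Measurable[𝓐] Y) (hY' : Measurable[𝓐'] Y')
    {T : Set (E × E')} (hT : MeasurableSet T) :
    |(μ.map fun ω => (Y ω, Y' ω)).real T - ((μ.map Y).prod (μ.map Y')).real T|
      ≤ 2 * betaMix μ 𝓐 𝓐' := by
  have hYm : Measurable Y := hY.mono h𝓐 le_rfl
  have hY'm : Measurable Y' := hY'.mono h𝓐' le_rfl
  refine abs_measureReal_sub_le_of_measureDense
    (.of_generateFrom_isSetAlgebra_finite _ isSetAlgebra_rectangleAlgebra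
      generateFrom_rectangleAlgebra.symm) ?_ hT
  rintro _ ⟨α, β, _, _, g, h, hg, hh, S, rfl⟩
  have := Fintype.ofFinite α
  have := Fintype.ofFinite β
  refine (abs_measureReal_preimage_sub_le_sum
    (measurableSet_prodMap_preimage_singleton hg hh) S).trans ?_
  rw [Fintype.sum_prod_type]
  simp only [prodMap_preimage_singleton, map_measureReal_apply (hYm.prodMk hY'm)
    ((hg _).prod (hh _)), mk_preimage_prod, measureReal_prod_prod,
    map_measureReal_apply hYm (hg _), map_measureReal_apply hY'm (hh _)]
  exact sum_abs_measureReal_inter_sub_mul_le_two_betaMix h𝓐 h𝓐' (fun a => hY (hg a))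
    (fun b => hY' (hh b)) (pairwise_disjoint_fiber (g ∘ Y)) (pairwise_disjoint_fiber (h ∘ Y'))
    (by simp only [← preimage_iUnion, iUnion_of_singleton, preimage_univ])
    (by simp only [← preimage_iUnion, iUnion_of_singleton, preimage_univ])

end Coupling

/-- The bounded case (`η = ∞`) of Yoshihara's inequality: for `0 ≤ f ≤ M`,
`|E f(Y,Y′) − E f(Ỹ,Ỹ′)| ≤ 2 M β(𝓐,𝓐′)`, where `(Ỹ,Ỹ′)` is an independent pair with
the same marginals as `(Y,Y′)` (so that `E f(Ỹ,Ỹ′)` is the integral of `f` against the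
product of the marginal laws). -/
theorem bounded_beta_mixing_inequality {Ω E E' : Type*} {m0 : MeasurableSpace Ω}
    [MeasurableSpace E] [MeasurableSpace E']
    (μ : Measure Ω) (hprob : IsProbabilityMeasure μ)
    (𝓐 𝓐' : MeasurableSpace Ω) (h𝓐 : 𝓐 ≤ m0) (h𝓐' : 𝓐' ≤ m0)
    (Y : Ω → E) (Y' : Ω → E')
    (hY : @Measurable Ω E 𝓐 _ Y) (hY' : @Measurable Ω E' 𝓐' _ Y')
    (f : E × E' → ℝ) (hf : Measurable f) (M : ℝ)
    (hf0 : ∀ p, 0 ≤ f p) (hfM : ∀ p, f p ≤ M) :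
    |(∫ ω, f (Y ω, Y' ω) ∂μ) -
        ∫ p, f p ∂((@MeasureTheory.Measure.map Ω E m0 _ Y μ).prod (@MeasureTheory.Measure.map Ω E' m0 _ Y' μ))| ≤
      2 * M * @betaMix Ω m0 μ 𝓐 𝓐' := by
  have hpair : Measurable[m0] fun ω => (Y ω, Y' ω) :=
    (hY.mono h𝓐 le_rfl).prodMk (hY'.mono h𝓐' le_rfl)
  obtain ⟨ω⟩ := nonempty_of_isProbabilityMeasure μ
  have hM : 0 ≤ M := (hf0 _).trans (hfM (Y ω, Y' ω))
  rw [← integral_map hpair.aemeasurable hf.aestronglyMeasurable, mul_assoc, mul_left_comm]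
  exact abs_integral_sub_le_of_abs_measureReal_le hf hM hf0 hfM fun t =>
    abs_measureReal_map_sub_prod_le_two_betaMix h𝓐 h𝓐' hY hY'
      (measurableSet_le measurable_const hf)
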